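/- If an edge uv of a graph with a 2-bisection c is replaced by a single diamond D (yielding graph G'), then c can be extended to a 2-bisection of G': if c(u) = c(v), colour the two degree-2 vertices of D with the colour opposite to c(u) and the two degree-3 vertices of D with colour c(u) if needed to balance; if c(u) ≠ c(v), use an asymmetric colouring of D. In particular, G' admits a 2-bisection. -/

import Mathlib

open SimpleGraph Finset

/-- The subgraph of `G` consisting of edges whose endpoints receive the same
colour under the 2-colouring `c`. Its connected components are the
monochromatic components of the colouring. -/
def monoSubgraph {V : Type*} (G : SimpleGraph V) (c : V → Bool) : SimpleGraph V where
  Adj u v := G.Adj u v ∧ c u = c v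
  symm := ⟨fun u v h => ⟨h.1.symm, h.2.symm⟩⟩
  loopless := ⟨fun v h => G.loopless.irrefl v h.1⟩

/-- `c` is a `k`-bisection of `G`: the two colour classes have the same size and
every monochromatic component has at most `k` vertices. -/
def IsKBisection {V : Type*} (G : SimpleGraph V) (c : V → Bool) (k : ℕ) : Prop :=
  {v | c v = true}.ncard = {v | c v = false}.ncard ∧
    ∀ v : V, {w | (monoSubgraph G c).Reachable v w}.ncard ≤ k

/-- `G` is cubic: every vertex has degree 3. -/
def IsCubic {V : Type*} (G : SimpleGraph V) : Prop :=
  ∀ v : V, (G.neighborSet v).ncard = 3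

/-- `G` is bridgeless: no edge is a cut-edge. -/
def Bridgeless {V : Type*} (G : SimpleGraph V) : Prop :=
  ∀ e ∈ G.edgeSet, ¬ G.IsBridge e

/-- `G` is claw-free: no induced subgraph isomorphic to `K_{1,3}`. -/
def ClawFree {V : Type*} (G : SimpleGraph V) : Prop :=
  ¬ ∃ v a b c : V, a ≠ b ∧ a ≠ c ∧ b ≠ c ∧
    G.Adj v a ∧ G.Adj v b ∧ G.Adj v c ∧ ¬ G.Adj a b ∧ ¬ G.Adj a c ∧ ¬ G.Adj b c

/-- The diamond graph `K₄ - e` on `Fin 4`, with non-adjacent (degree-2)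
vertices `0` and `1` and adjacent (degree-3) vertices `2` and `3`. -/
def diamondGraph : SimpleGraph (Fin 4) :=
  SimpleGraph.fromEdgeSet {s(0, 2), s(0, 3), s(1, 2), s(1, 3), s(2, 3)}

/-- `f` realises the diamond graph as an induced subgraph of `G`. -/
def IsInducedDiamond {V : Type*} (G : SimpleGraph V) (f : Fin 4 → V) : Prop :=
  Function.Injective f ∧ ∀ i j, G.Adj (f i) (f j) ↔ diamondGraph.Adj i j

/-- One direction of the adjacency relation of the graph obtained from `H` by
replacing the edge `uv` by a single diamond: the edge `uv` is deleted, a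
diamond on `Fin 4` is added, `u` is joined to its degree-2 vertex `0` and `v`
to its degree-2 vertex `1`. -/
def diamondReplRel {V : Type*} (H : SimpleGraph V) (u v : V) :
    V ⊕ Fin 4 → V ⊕ Fin 4 → Prop
  | Sum.inl a, Sum.inl b => H.Adj a b ∧ ¬(a = u ∧ b = v) ∧ ¬(a = v ∧ b = u)
  | Sum.inl a, Sum.inr j => (a = u ∧ j = 0) ∨ (a = v ∧ j = 1)
  | Sum.inr _, Sum.inl _ => False
  | Sum.inr j, Sum.inr j' => diamondGraph.Adj j j'

/-- The graph obtained from `H` by replacing the edge `uv` by a diamond. -/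
def diamondRepl {V : Type*} (H : SimpleGraph V) (u v : V) : SimpleGraph (V ⊕ Fin 4) where
  Adj x y := x ≠ y ∧ (diamondReplRel H u v x y ∨ diamondReplRel H u v y x)
  symm := ⟨fun x y h => ⟨h.1.symm, h.2.symm⟩⟩
  loopless := ⟨fun x h => h.1 rfl⟩

/-!
Give the degree-2 vertices `0`, `1` of the diamond the colours opposite to their outside
neighbours `u`, `v`, and the degree-3 vertices `2`, `3` the colours of `u`, `v`. Each colour is
then used twice on the diamond, which keeps the classes balanced. No edge between the diamond and
the old graph is monochromatic, and the old monochromatic edges only lose `uv`, so the new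
monochromatic graph is a subgraph of the disjoint union of the old one with the monochromatic part
of the diamond. The latter is a matching (`23` if `c u = c v`, otherwise `03` and `12`), so every
monochromatic component still has at most two vertices.
-/

namespace SimpleGraph

variable {α β : Type*}

theorem Reachable.mem_of_adj_closed {G : SimpleGraph α} {s : Set α}
    (hs : ∀ ⦃x y⦄, x ∈ s → G.Adj x y → y ∈ s) {a b : α} (ha : a ∈ s) (hab : G.Reachable a b) :
    b ∈ s := by
  obtain ⟨p⟩ := hab
  induction p with
  | nil => exact ha
  | cons hadj _ ih => exact ih (hs ha hadj)

theorem ncard_setOf_reachable_le_two_of_subsingleton {G : SimpleGraph α}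
    (hG : ∀ a, (G.neighborSet a).Subsingleton) (a : α) : {b | G.Reachable a b}.ncard ≤ 2 := by
  have hsub : {b | G.Reachable a b} ⊆ insert a (G.neighborSet a) := by
    rintro b ⟨p⟩
    induction p with
    | nil => exact Set.mem_insert _ _
    | @cons a x b hax _ ih =>
      rcases ih with rfl | hxb
      · exact Or.inr hax
      · exact Or.inl (hG x hxb hax.symm)
  calc {b | G.Reachable a b}.ncard ≤ (insert a (G.neighborSet a)).ncard :=
        Set.ncard_le_ncard hsub ((hG a).finite.insert a)
    _ ≤ (G.neighborSet a).ncard + 1 := Set.ncard_insert_le _ _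
    _ ≤ 2 := by grw [(Set.ncard_le_one (hG a).finite).2 (hG a)]

theorem ncard_setOf_reachable_le_of_le [Finite α] {G G' : SimpleGraph α} (h : G ≤ G') (a : α) :
    {b | G.Reachable a b}.ncard ≤ {b | G'.Reachable a b}.ncard :=
  Set.ncard_le_ncard (fun _ hb => hb.mono h) (Set.toFinite _)

variable {G : SimpleGraph α} {H : SimpleGraph β}

theorem setOf_reachable_sum_inl (a : α) :
    {y | (G ⊕g H).Reachable (.inl a) y} = Sum.inl '' {b | G.Reachable a b} := by
  ext y
  constructor
  · refine fun hy => hy.mem_of_adj_closed ?_ ⟨a, .refl a, rfl⟩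
    rintro _ (b' | w) ⟨b, hb, rfl⟩ hadj
    · exact ⟨b', hb.trans (sum_adj_inl.1 hadj).reachable, rfl⟩
    · exact absurd hadj (not_adj_sum_inl_inr _ _)
  · rintro ⟨b, hb, rfl⟩
    exact hb.map Embedding.sumInl.toHom

theorem setOf_reachable_sum_inr (a : β) :
    {y | (G ⊕g H).Reachable (.inr a) y} = Sum.inr '' {b | H.Reachable a b} := by
  ext y
  constructor
  · refine fun hy => hy.mem_of_adj_closed ?_ ⟨a, .refl a, rfl⟩
    rintro _ (w | b') ⟨b, hb, rfl⟩ hadj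
    · exact absurd hadj.symm (not_adj_sum_inl_inr _ _)
    · exact ⟨b', hb.trans (sum_adj_inr.1 hadj).reachable, rfl⟩
  · rintro ⟨b, hb, rfl⟩
    exact hb.map Embedding.sumInr.toHom

theorem ncard_setOf_reachable_sum_le {k : ℕ} (hG : ∀ a, {b | G.Reachable a b}.ncard ≤ k)
    (hH : ∀ a, {b | H.Reachable a b}.ncard ≤ k) :
    ∀ x, {y | (G ⊕g H).Reachable x y}.ncard ≤ k
  | .inl a => by
    rw [setOf_reachable_sum_inl, Set.ncard_image_of_injective _ Sum.inl_injective]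
    exact hG a
  | .inr a => by
    rw [setOf_reachable_sum_inr, Set.ncard_image_of_injective _ Sum.inr_injective]
    exact hH a

end SimpleGraph

theorem Set.ncard_preimage_sumElim {α β γ : Type*} [Finite α] [Finite β] (f : α → γ) (g : β → γ)
    (s : Set γ) : (Sum.elim f g ⁻¹' s).ncard = (f ⁻¹' s).ncard + (g ⁻¹' s).ncard := by
  rw [Set.preimage_sumElim, Set.ncard_union_eq Set.disjoint_image_inl_image_inr
    (Set.toFinite _) (Set.toFinite _), Set.ncard_image_of_injective _ Sum.inl_injective,
    Set.ncard_image_of_injective _ Sum.inr_injective]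

theorem diamondGraph_adj_iff (i j : Fin 4) : diamondGraph.Adj i j ↔ i ≠ j ∧ s(i, j) ≠ s(0, 1) := by
  fin_cases i <;> fin_cases j <;> simp [diamondGraph]

def diamondColoring (a b : Bool) : Fin 4 → Bool := ![!a, !b, a, b]

theorem ncard_diamondColoring_fiber (a b e : Bool) : {j | diamondColoring a b j = e}.ncard = 2 := by
  rw [Set.ncard_eq_toFinset_card']
  revert a b e; decide

theorem subsingleton_neighborSet_monoSubgraph_diamondColoring (a b : Bool) (j : Fin 4) :
    ((monoSubgraph diamondGraph (diamondColoring a b)).neighborSet j).Subsingleton := by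
  intro k hk l hl
  simp only [mem_neighborSet, monoSubgraph, diamondGraph_adj_iff] at hk hl
  revert a b j k l; decide

theorem monoSubgraph_diamondRepl_le {V : Type*} (H : SimpleGraph V) (u v : V) (c : V → Bool) :
    monoSubgraph (diamondRepl H u v) (Sum.elim c (diamondColoring (c u) (c v))) ≤
      monoSubgraph H c ⊕g monoSubgraph diamondGraph (diamondColoring (c u) (c v)) := by
  rintro (a | j) (b | k) ⟨⟨-, hrel⟩, hcol⟩
  · exact ⟨hrel.elim (·.1) (·.1.symm), hcol⟩
  · rcases hrel with (⟨rfl, rfl⟩ | ⟨rfl, rfl⟩) | hrel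
    · simp [diamondColoring] at hcol
    · simp [diamondColoring] at hcol
    · exact hrel.elim
  · rcases hrel with hrel | (⟨rfl, rfl⟩ | ⟨rfl, rfl⟩)
    · exact hrel.elim
    · simp [diamondColoring] at hcol
    · simp [diamondColoring] at hcol
  · exact ⟨hrel.elim id (·.symm), hcol⟩

theorem diamondRepl_two_bisection_general {V : Type*} [Fintype V]
    (H : SimpleGraph V) (u v : V)
    (c : V → Bool) (hc : IsKBisection H c 2) :
    ∃ c' : V ⊕ Fin 4 → Bool, (∀ w : V, c' (Sum.inl w) = c w) ∧
      IsKBisection (diamondRepl H u v) c' 2 := by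
  set d := diamondColoring (c u) (c v)
  have hcount (e : Bool) : {x | Sum.elim c d x = e}.ncard = {w | c w = e}.ncard + 2 :=
    (Set.ncard_preimage_sumElim c d {e}).trans (congrArg _ (ncard_diamondColoring_fiber _ _ e))
  refine ⟨Sum.elim c d, fun _ => rfl, by rw [hcount, hcount, hc.1], fun x => ?_⟩
  calc _ ≤ {y | (monoSubgraph H c ⊕g monoSubgraph diamondGraph d).Reachable x y}.ncard :=
        ncard_setOf_reachable_le_of_le (monoSubgraph_diamondRepl_le H u v c) x
    _ ≤ 2 := ncard_setOf_reachable_sum_le hc.2 (ncard_setOf_reachable_le_two_of_subsingleton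
        (subsingleton_neighborSet_monoSubgraph_diamondColoring _ _)) x

/-- A 2-bisection `c` of `H` extends to a 2-bisection of the graph `G'`
obtained by replacing an edge `uv` by a diamond; in particular `G'` admits a
2-bisection. -/
theorem diamondRepl_two_bisection {V : Type*} [Fintype V] [DecidableEq V]
    (H : SimpleGraph V) (u v : V) (huv : H.Adj u v)
    (c : V → Bool) (hc : IsKBisection H c 2) :
    ∃ c' : V ⊕ Fin 4 → Bool, (∀ w : V, c' (Sum.inl w) = c w) ∧
      IsKBisection (diamondRepl H u v) c' 2 :=
  diamondRepl_two_bisection_general H u v c hc
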